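/- (Maximal effort requires fully informative tagging.) Let ε0, ε1 ∈ (0,1) with ε0 + ε1 < 1, D = 1 − ε0 − ε1, λ ∈ (0,1), and suppose c'(λ) = D·(μ̄(λ) − μ̲(λ)) > 0. If a tagging policy π with τ_0 > 0 and τ_1 > 0 satisfies the incentive-compatibility condition v̄_A(1) − v̄_A(0) = c'(λ), where v̄_A(ω) = Σ_{σ∈{0,1}} L_σ(ω)·μ_σ, then the policy is fully informative up to relabeling of tags: either π(0|0) = π(1|1) = 1 or π(0|0) = π(1|1) = 0. -/
import Mathlib


/-- Distorted likelihood of a tag σ given state ω = 0: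
L_σ(0) = (1−ε0)·π(σ|0) + ε0·π(σ|1), where (pσ0, pσ1) = (π(σ|0), π(σ|1)). -/
def L0 (ε0 pσ0 pσ1 : ℝ) : ℝ := (1 - ε0) * pσ0 + ε0 * pσ1

/-- Distorted likelihood of a tag σ given state ω = 1:
L_σ(1) = ε1·π(σ|0) + (1−ε1)·π(σ|1). -/
def L1 (ε1 pσ0 pσ1 : ℝ) : ℝ := ε1 * pσ0 + (1 - ε1) * pσ1

/-- Probability of tag σ: τ_σ = (1−λ)·L_σ(0) + λ·L_σ(1). -/
def tagProb (ε0 ε1 lam pσ0 pσ1 : ℝ) : ℝ :=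
  (1 - lam) * L0 ε0 pσ0 pσ1 + lam * L1 ε1 pσ0 pσ1

/-- Bayesian posterior probability of ω = 1 given tag σ: μ_σ = λ·L_σ(1)/τ_σ. -/
noncomputable def post (ε0 ε1 lam pσ0 pσ1 : ℝ) : ℝ :=
  lam * L1 ε1 pσ0 pσ1 / tagProb ε0 ε1 lam pσ0 pσ1

/-- Lower extreme posterior under fully informative tagging. -/
noncomputable def muLo (ε0 ε1 lam : ℝ) : ℝ :=
  lam * ε1 / ((1 - lam) * (1 - ε0) + lam * ε1)

/-- Upper extreme posterior under fully informative tagging. -/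
noncomputable def muHi (ε0 ε1 lam : ℝ) : ℝ :=
  lam * (1 - ε1) / ((1 - lam) * ε0 + lam * (1 - ε1))

lemma muLo_le_post (ε0 ε1 lam p q : ℝ)
    (hε0 : ε0 ∈ Set.Ioo (0 : ℝ) 1) (hε1 : ε1 ∈ Set.Ioo (0 : ℝ) 1)
    (hεsum : ε0 + ε1 < 1) (hlam : lam ∈ Set.Ioo (0 : ℝ) 1)
    (hp : 0 ≤ p) (hq : 0 ≤ q) (hτ : 0 < tagProb ε0 ε1 lam p q) :
    muLo ε0 ε1 lam ≤ post ε0 ε1 lam p q := by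
  obtain ⟨hε0a, hε0b⟩ := hε0; obtain ⟨hε1a, hε1b⟩ := hε1
  obtain ⟨hla, hlb⟩ := hlam
  have hA : 0 < (1 - lam) * (1 - ε0) + lam * ε1 := by nlinarith
  unfold muLo post
  rw [div_le_div_iff₀ hA hτ]
  unfold tagProb L0 L1 at *
  nlinarith [mul_nonneg (mul_nonneg (mul_nonneg hla.le (by linarith : (0:ℝ) ≤ 1 - lam)) hq)
    (by linarith : (0:ℝ) ≤ 1 - ε0 - ε1)]

lemma post_le_muHi (ε0 ε1 lam p q : ℝ)
    (hε0 : ε0 ∈ Set.Ioo (0 : ℝ) 1) (hε1 : ε1 ∈ Set.Ioo (0 : ℝ) 1)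
    (hεsum : ε0 + ε1 < 1) (hlam : lam ∈ Set.Ioo (0 : ℝ) 1)
    (hp : 0 ≤ p) (hq : 0 ≤ q) (hτ : 0 < tagProb ε0 ε1 lam p q) :
    post ε0 ε1 lam p q ≤ muHi ε0 ε1 lam := by
  obtain ⟨hε0a, hε0b⟩ := hε0; obtain ⟨hε1a, hε1b⟩ := hε1
  obtain ⟨hla, hlb⟩ := hlam
  have hB : 0 < (1 - lam) * ε0 + lam * (1 - ε1) := by nlinarith
  unfold muHi post
  rw [div_le_div_iff₀ hτ hB]
  unfold tagProb L0 L1 at *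
  nlinarith [mul_nonneg (mul_nonneg (mul_nonneg hla.le (by linarith : (0:ℝ) ≤ 1 - lam)) hp)
    (by linarith : (0:ℝ) ≤ 1 - ε0 - ε1)]

/-- Maximal effort requires fully informative tagging: if c'(λ) = D·(μ̄(λ) − μ̲(λ)) > 0
and a tagging policy with τ_0 > 0 and τ_1 > 0 satisfies the incentive-compatibility
condition v̄_A(1) − v̄_A(0) = c'(λ), then the policy is fully informative up to
relabeling of tags: either π(0|0) = π(1|1) = 1 or π(0|0) = π(1|1) = 0. -/
theorem maximal_effort_fully_informative
    (ε0 ε1 lam cp π00 π01 π10 π11 : ℝ)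
    (hε0 : ε0 ∈ Set.Ioo (0 : ℝ) 1) (hε1 : ε1 ∈ Set.Ioo (0 : ℝ) 1)
    (hεsum : ε0 + ε1 < 1)
    (hlam : lam ∈ Set.Ioo (0 : ℝ) 1)
    (hcp : cp = (1 - ε0 - ε1) * (muHi ε0 ε1 lam - muLo ε0 ε1 lam))
    (hcppos : 0 < cp)
    (h00 : π00 ∈ Set.Icc (0 : ℝ) 1) (h01 : π01 ∈ Set.Icc (0 : ℝ) 1)
    (h10 : π10 ∈ Set.Icc (0 : ℝ) 1) (h11 : π11 ∈ Set.Icc (0 : ℝ) 1)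
    (hrow0 : π00 + π10 = 1) (hrow1 : π01 + π11 = 1)
    (hτ0 : 0 < tagProb ε0 ε1 lam π00 π01)
    (hτ1 : 0 < tagProb ε0 ε1 lam π10 π11)
    (hIC :
      (L1 ε1 π00 π01 * post ε0 ε1 lam π00 π01 + L1 ε1 π10 π11 * post ε0 ε1 lam π10 π11)
        - (L0 ε0 π00 π01 * post ε0 ε1 lam π00 π01
            + L0 ε0 π10 π11 * post ε0 ε1 lam π10 π11) = cp) :
    (π00 = 1 ∧ π11 = 1) ∨ (π00 = 0 ∧ π11 = 0) := by
  have hD : 0 < 1 - ε0 - ε1 := by linarith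
  -- posterior bounds
  have hb0lo := muLo_le_post ε0 ε1 lam π00 π01 hε0 hε1 hεsum hlam h00.1 h01.1 hτ0
  have hb0hi := post_le_muHi ε0 ε1 lam π00 π01 hε0 hε1 hεsum hlam h00.1 h01.1 hτ0
  have hb1lo := muLo_le_post ε0 ε1 lam π10 π11 hε0 hε1 hεsum hlam h10.1 h11.1 hτ1
  have hb1hi := post_le_muHi ε0 ε1 lam π10 π11 hε0 hε1 hεsum hlam h10.1 h11.1 hτ1
  set μ0 := post ε0 ε1 lam π00 π01 with hμ0
  set μ1 := post ε0 ε1 lam π10 π11 with hμ1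
  set M := muHi ε0 ε1 lam - muLo ε0 ε1 lam with hMdef
  have hMpos : 0 < M := by
    by_contra h
    push_neg at h
    nlinarith
  -- rewrite IC
  have e0 : L1 ε1 π00 π01 - L0 ε0 π00 π01 = (1 - ε0 - ε1) * (π01 - π00) := by
    unfold L1 L0; ring
  have e1 : L1 ε1 π10 π11 - L0 ε0 π10 π11 = (1 - ε0 - ε1) * (π00 - π01) := by
    unfold L1 L0
    have ha : π10 = 1 - π00 := by linarith
    have hb : π11 = 1 - π01 := by linarith
    rw [ha, hb]; ring
  have hIC' : (1 - ε0 - ε1) * ((π01 - π00) * (μ0 - μ1)) = (1 - ε0 - ε1) * M := by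
    have : (L1 ε1 π00 π01 - L0 ε0 π00 π01) * μ0 + (L1 ε1 π10 π11 - L0 ε0 π10 π11) * μ1
        = cp := by linarith [hIC]
    rw [e0, e1] at this
    rw [hcp] at this
    nlinarith [this]
  have key : (π01 - π00) * (μ0 - μ1) = M :=
    mul_left_cancel₀ (ne_of_gt hD) hIC'
  set x := π01 - π00 with hx
  set y := μ0 - μ1 with hy
  have hyabs : |y| ≤ M := by
    rw [abs_le]; constructor <;> [linarith; linarith]
  have hxle : |x| ≤ 1 := by
    rw [abs_le]
    constructor
    · have := h01.1; have := h00.2; simp only [hx]; linarith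
    · have := h01.2; have := h00.1; simp only [hx]; linarith
  have hxge : 1 ≤ |x| := by
    by_contra h
    push_neg at h
    have h1 : x * y ≤ |x * y| := le_abs_self _
    have h2 : |x * y| = |x| * |y| := abs_mul x y
    have h3 : |x| * |y| ≤ |x| * M := by
      apply mul_le_mul_of_nonneg_left hyabs (abs_nonneg x)
    have h4 : |x| * M < 1 * M := by
      apply mul_lt_mul_of_pos_right h hMpos
    linarith [key]
  have hxabs : |x| = 1 := le_antisymm hxle hxge
  rcases abs_cases x with ⟨h1, _⟩ | ⟨h1, _⟩
  · -- x = 1 : π01 - π00 = 1, so π00 = 0, π01 = 1, π11 = 0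
    right
    have hx1 : π01 - π00 = 1 := by rw [← hx, ← h1]; exact hxabs
    constructor
    · linarith [h01.2, h00.1]
    · linarith [h01.2, h00.1]
  · -- x = -1 : π00 = 1, π01 = 0, π11 = 1
    left
    have hx1 : π01 - π00 = -1 := by
      have h2 : -(π01 - π00) = 1 := by rw [← hx, ← h1]; exact hxabs
      linarith [h2]
    constructor
    · linarith [h00.2, h01.1]
    · linarith [h00.2, h01.1]
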